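/- Assume n ≤ d and take the linear activation σ = identity. Then for every R with n < R < R_typ-max(n,d,n) + 1 (i.e. n < R ≤ R_typ-max(n,d,n)), the inclusion H_MIRNN(n) ⊊ H_CPRNN(R,n) is strict (both sides taken with the same d and with linear activation). -/

import Mathlib

open Matrix MeasureTheory

noncomputable section

/-- The CP tensor `[[A,B,C]]`. -/
def cpT {d1 d2 d3 R : ℕ} (A : Matrix (Fin d1) (Fin R) ℝ) (B : Matrix (Fin d2) (Fin R) ℝ)
    (C : Matrix (Fin d3) (Fin R) ℝ) : Fin d1 → Fin d2 → Fin d3 → ℝ :=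
  fun i j k => ∑ r, A i r * B j r * C k r

/-- `(T ×₁ u ×₂ v)` for a third order tensor `T`. -/
def modeProd {d1 d2 d3 : ℕ} (T : Fin d1 → Fin d2 → Fin d3 → ℝ) (u : Fin d1 → ℝ)
    (v : Fin d2 → ℝ) : Fin d3 → ℝ :=
  fun k => ∑ i, ∑ j, T i j k * u i * v j

/-- The CP rank of a tensor: the minimal `R` admitting a rank-`R` CP decomposition. -/
def cprank {d1 d2 d3 : ℕ} (T : Fin d1 → Fin d2 → Fin d3 → ℝ) : ℕ :=
  sInf {R : ℕ | ∃ (A : Matrix (Fin d1) (Fin R) ℝ) (B : Matrix (Fin d2) (Fin R) ℝ)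
    (C : Matrix (Fin d3) (Fin R) ℝ), T = cpT A B C}

/-- The maximal CP rank of tensors in `ℝ^{d1×d2×d3}`. -/
def Rmax (d1 d2 d3 : ℕ) : ℕ :=
  sSup {r : ℕ | ∃ T : Fin d1 → Fin d2 → Fin d3 → ℝ, cprank T = r}

/-- `R` is a typical rank if the set of tensors of CP rank `R` has positive Lebesgue measure. -/
def IsTypicalRank (d1 d2 d3 R : ℕ) : Prop :=
  0 < volume {T : Fin d1 → Fin d2 → Fin d3 → ℝ | cprank T = R}

/-- The maximal typical CP rank. -/
def RtypMax (d1 d2 d3 : ℕ) : ℕ := sSup {R : ℕ | IsTypicalRank d1 d2 d3 R}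

/-- Hidden states of a CPRNN; `x t` is the input at time `t+1`. -/
def cprnnStates {n d R : ℕ} (σ : ℝ → ℝ) (h0 : Fin n → ℝ)
    (A : Matrix (Fin n) (Fin R) ℝ) (B : Matrix (Fin d) (Fin R) ℝ) (C : Matrix (Fin n) (Fin R) ℝ)
    (U : Matrix (Fin n) (Fin d) ℝ) (V : Matrix (Fin n) (Fin n) ℝ) (b : Fin n → ℝ)
    (x : ℕ → Fin d → ℝ) : ℕ → Fin n → ℝ
  | 0 => h0
  | t + 1 => fun k =>
      σ (modeProd (cpT A B C) (cprnnStates σ h0 A B C U V b x t) (x t) k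
        + V.mulVec (cprnnStates σ h0 A B C U V b x t) k + U.mulVec (x t) k + b k)

/-- Hidden states of a CPBIRNN (second-order term only). -/
def cpbirnnStates {n d R : ℕ} (σ : ℝ → ℝ) (h0 : Fin n → ℝ)
    (A : Matrix (Fin n) (Fin R) ℝ) (B : Matrix (Fin d) (Fin R) ℝ) (C : Matrix (Fin n) (Fin R) ℝ)
    (x : ℕ → Fin d → ℝ) : ℕ → Fin n → ℝ
  | 0 => h0
  | t + 1 => fun k =>
      σ (modeProd (cpT A B C) (cpbirnnStates σ h0 A B C x t) (x t) k)

/-- Hidden states of a 2RNN with arbitrary second-order tensor. -/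
def rnn2States {n d : ℕ} (σ : ℝ → ℝ) (h0 : Fin n → ℝ) (T : Fin n → Fin d → Fin n → ℝ)
    (U : Matrix (Fin n) (Fin d) ℝ) (V : Matrix (Fin n) (Fin n) ℝ) (b : Fin n → ℝ)
    (x : ℕ → Fin d → ℝ) : ℕ → Fin n → ℝ
  | 0 => h0
  | t + 1 => fun k =>
      σ (modeProd T (rnn2States σ h0 T U V b x t) (x t) k
        + V.mulVec (rnn2States σ h0 T U V b x t) k + U.mulVec (x t) k + b k)

/-- Hidden states of a MIRNN. -/
def mirnnStates {n d : ℕ} (σ : ℝ → ℝ) (h0 α β1 β2 b : Fin n → ℝ)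
    (U : Matrix (Fin n) (Fin d) ℝ) (V : Matrix (Fin n) (Fin n) ℝ)
    (x : ℕ → Fin d → ℝ) : ℕ → Fin n → ℝ
  | 0 => h0
  | t + 1 => fun k =>
      σ (α k * V.mulVec (mirnnStates σ h0 α β1 β2 b U V x t) k * U.mulVec (x t) k
        + β1 k * V.mulVec (mirnnStates σ h0 α β1 β2 b U V x t) k
        + β2 k * U.mulVec (x t) k + b k)

/-- The class of functions computed by CPRNNs of rank `R` and hidden size `n`
(mapping the input sequence `x¹,x²,…` to the hidden state sequence `h¹,h²,…`). -/
def HCPRNN (d n R : ℕ) (σ : ℝ → ℝ) : Set ((ℕ → Fin d → ℝ) → ℕ → Fin n → ℝ) :=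
  {h | ∃ (h0 : Fin n → ℝ) (A : Matrix (Fin n) (Fin R) ℝ) (B : Matrix (Fin d) (Fin R) ℝ)
      (C : Matrix (Fin n) (Fin R) ℝ) (U : Matrix (Fin n) (Fin d) ℝ)
      (V : Matrix (Fin n) (Fin n) ℝ) (b : Fin n → ℝ),
      ∀ x t, h x t = cprnnStates σ h0 A B C U V b x (t + 1)}

/-- The class of functions computed by CPBIRNNs of rank `R` and hidden size `n`. -/
def HCPBIRNN (d n R : ℕ) (σ : ℝ → ℝ) : Set ((ℕ → Fin d → ℝ) → ℕ → Fin n → ℝ) :=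
  {h | ∃ (h0 : Fin n → ℝ) (A : Matrix (Fin n) (Fin R) ℝ) (B : Matrix (Fin d) (Fin R) ℝ)
      (C : Matrix (Fin n) (Fin R) ℝ),
      ∀ x t, h x t = cpbirnnStates σ h0 A B C x (t + 1)}

/-- The class of functions computed by 2RNNs of hidden size `n`. -/
def H2RNN (d n : ℕ) (σ : ℝ → ℝ) : Set ((ℕ → Fin d → ℝ) → ℕ → Fin n → ℝ) :=
  {h | ∃ (h0 : Fin n → ℝ) (T : Fin n → Fin d → Fin n → ℝ) (U : Matrix (Fin n) (Fin d) ℝ)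
      (V : Matrix (Fin n) (Fin n) ℝ) (b : Fin n → ℝ),
      ∀ x t, h x t = rnn2States σ h0 T U V b x (t + 1)}

/-- The class of functions computed by MIRNNs of hidden size `n`. -/
def HMIRNN (d n : ℕ) (σ : ℝ → ℝ) : Set ((ℕ → Fin d → ℝ) → ℕ → Fin n → ℝ) :=
  {h | ∃ (h0 α β1 β2 b : Fin n → ℝ) (U : Matrix (Fin n) (Fin d) ℝ)
      (V : Matrix (Fin n) (Fin n) ℝ),
      ∀ x t, h x t = mirnnStates σ h0 α β1 β2 b U V x (t + 1)}

/-- The class `L(n,q) ∘ H_CPBIRNN(R,n)`: CPBIRNNs composed with a linear output map. -/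
def LHCPBIRNN (d n q R : ℕ) (σ : ℝ → ℝ) : Set ((ℕ → Fin d → ℝ) → ℕ → Fin q → ℝ) :=
  {f | ∃ (ℓ : (Fin n → ℝ) →ₗ[ℝ] (Fin q → ℝ)) (h : (ℕ → Fin d → ℝ) → ℕ → Fin n → ℝ),
      h ∈ HCPBIRNN d n R σ ∧ ∀ x t, f x t = ℓ (h x t)}

end

/-!
A MIRNN is the CPRNN of rank `n` with factors `A = (diag α · V)ᵀ`, `B = Uᵀ`, `C = 1`, and padding
CP factors with zero columns shows that the CPRNN classes grow with the rank; this gives the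
inclusion. For strictness, every tensor in `ℝ^{n×d×n}` is a sum of `n²` rank-one tensors (one per
fibre along the second mode), so `n < R ≤ R_typ-max(n,d,n)` forces `n ≥ 2`. With linear
activation, each coordinate of the second hidden state of a MIRNN has the form
`p(x¹) q(x²) + r(x¹) + s(x²)`, whose mixed part is a rank-one bilinear form; a rank-two CPRNN
computes `x¹₀ x²₀ + x¹₁ x²₁ + x²ₖ` instead, whose mixed part has rank two.
-/

section CPRank

variable {d1 d2 d3 : ℕ}

theorem cprank_le_of_eq_cpT {R : ℕ} {T : Fin d1 → Fin d2 → Fin d3 → ℝ}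
    (A : Matrix (Fin d1) (Fin R) ℝ) (B : Matrix (Fin d2) (Fin R) ℝ)
    (C : Matrix (Fin d3) (Fin R) ℝ) (h : T = cpT A B C) : cprank T ≤ R :=
  Nat.sInf_le ⟨A, B, C, h⟩

theorem cprank_le_mul (T : Fin d1 → Fin d2 → Fin d3 → ℝ) : cprank T ≤ d1 * d3 := by
  let e := (finProdFinEquiv : Fin d1 × Fin d3 ≃ Fin (d1 * d3)).symm
  refine cprank_le_of_eq_cpT (fun i r => if (e r).1 = i then 1 else 0)
    (fun j r => T (e r).1 j (e r).2) (fun k r => if (e r).2 = k then 1 else 0) ?_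
  funext i j k
  simp only [cpT, ← e.symm.sum_comp, Equiv.apply_symm_apply, Fintype.sum_prod_type,
    mul_ite, ite_mul, mul_one, one_mul, mul_zero, zero_mul, Finset.sum_ite_eq', Finset.mem_univ,
    if_true]

theorem IsTypicalRank.exists_cprank_eq {R : ℕ} (h : IsTypicalRank d1 d2 d3 R) :
    ∃ T : Fin d1 → Fin d2 → Fin d3 → ℝ, cprank T = R := by
  by_contra! hR
  simp [IsTypicalRank, hR] at h

theorem RtypMax_le_mul : RtypMax d1 d2 d3 ≤ d1 * d3 :=
  csSup_le' fun _ hR ↦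
    let ⟨T, hT⟩ := IsTypicalRank.exists_cprank_eq hR
    hT ▸ cprank_le_mul T

end CPRank

section Inclusion

variable {d n R d1 d2 d3 : ℕ} {σ : ℝ → ℝ}

theorem modeProd_cpT (A : Matrix (Fin d1) (Fin R) ℝ) (B : Matrix (Fin d2) (Fin R) ℝ)
    (C : Matrix (Fin d3) (Fin R) ℝ) (h : Fin d1 → ℝ) (x : Fin d2 → ℝ) :
    modeProd (cpT A B C) h x = C *ᵥ ((h ᵥ* A) * (x ᵥ* B)) := by
  funext k
  simp only [modeProd, cpT, mulVec, vecMul, dotProduct, Pi.mul_apply, Finset.sum_mul,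
    Finset.mul_sum]
  rw [Finset.sum_comm_cycle]
  refine Finset.sum_congr rfl fun r _ => ?_
  rw [Finset.sum_comm]
  refine Finset.sum_congr rfl fun j _ => Finset.sum_congr rfl fun i _ => ?_
  ring

theorem cpT_append_zero {m : ℕ} (A : Matrix (Fin d1) (Fin R) ℝ) (B : Matrix (Fin d2) (Fin R) ℝ)
    (C : Matrix (Fin d3) (Fin R) ℝ) :
    cpT (of fun i => Fin.append (A i) (0 : Fin m → ℝ)) (of fun j => Fin.append (B j) 0)
      (of fun k => Fin.append (C k) 0) = cpT A B C := by
  funext i j k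
  simp [cpT, Fin.sum_univ_add]

theorem cprnnStates_eq_rnn2States (h0 : Fin n → ℝ) (A : Matrix (Fin n) (Fin R) ℝ)
    (B : Matrix (Fin d) (Fin R) ℝ) (C : Matrix (Fin n) (Fin R) ℝ) (U : Matrix (Fin n) (Fin d) ℝ)
    (V : Matrix (Fin n) (Fin n) ℝ) (b : Fin n → ℝ) (x : ℕ → Fin d → ℝ) (t : ℕ) :
    cprnnStates σ h0 A B C U V b x t = rnn2States σ h0 (cpT A B C) U V b x t := by
  induction t with
  | zero => rfl
  | succ t ih => simp only [cprnnStates, rnn2States, ih]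

theorem HCPRNN_mono {R' : ℕ} (hR : R ≤ R') : HCPRNN d n R σ ⊆ HCPRNN d n R' σ := by
  obtain ⟨m, rfl⟩ := Nat.exists_eq_add_of_le hR
  rintro f ⟨h0, A, B, C, U, V, b, hf⟩
  refine ⟨h0, of fun i => Fin.append (A i) 0, of fun j => Fin.append (B j) 0,
    of fun k => Fin.append (C k) 0, U, V, b, fun x t => ?_⟩
  rw [hf, cprnnStates_eq_rnn2States, cprnnStates_eq_rnn2States, cpT_append_zero]

theorem mirnnStates_eq_cprnnStates (h0 α β1 β2 b : Fin n → ℝ) (U : Matrix (Fin n) (Fin d) ℝ)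
    (V : Matrix (Fin n) (Fin n) ℝ) (x : ℕ → Fin d → ℝ) (t : ℕ) :
    mirnnStates σ h0 α β1 β2 b U V x t
      = cprnnStates σ h0 (diagonal α * V)ᵀ Uᵀ 1 (diagonal β2 * U) (diagonal β1 * V) b x t := by
  induction t with
  | zero => rfl
  | succ t ih =>
    funext k
    simp only [mirnnStates, cprnnStates, ih, modeProd_cpT, vecMul_transpose, one_mulVec,
      ← mulVec_mulVec, mulVec_diagonal, Pi.mul_apply]

theorem HMIRNN_subset_HCPRNN : HMIRNN d n σ ⊆ HCPRNN d n n σ := by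
  rintro f ⟨h0, α, β1, β2, b, U, V, hf⟩
  exact ⟨h0, _, _, _, _, _, b, fun x t => (hf x t).trans (mirnnStates_eq_cprnnStates ..)⟩

end Inclusion

section Separation

variable {d n : ℕ}

theorem not_forall_eq_mul_add_add {ι K : Type*} [DecidableEq ι] [CommRing K] [Nontrivial K]
    {i j : ι} (hij : i ≠ j) (g p q r s : (ι → K) → K) :
    ¬ ∀ a c, a i * c i + a j * c j + g c = p a * q c + r a + s c := by
  intro h
  have key : ∀ a c : ι → K, a i * c i + a j * c j = (p a - p 0) * (q c - q 0) := by
    intro a c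
    have hac := h a c
    have ha := h a 0
    have hc := h 0 c
    have h00 := h 0 0
    simp only [Pi.zero_apply, mul_zero, zero_mul, add_zero] at ha hc h00
    linear_combination hac - ha - hc + h00
  have minor : ∀ a a' c c' : ι → K, (a i * c i + a j * c j) * (a' i * c' i + a' j * c' j)
      = (a i * c' i + a j * c' j) * (a' i * c i + a' j * c j) := by
    intro a a' c c'
    rw [key, key, key, key]
    ring
  simpa [hij, hij.symm] using minor (Pi.single i 1) (Pi.single j 1) (Pi.single i 1) (Pi.single j 1)

theorem exists_mirnnStates_id_two_eq (h0 α β1 β2 b : Fin n → ℝ) (U : Matrix (Fin n) (Fin d) ℝ)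
    (V : Matrix (Fin n) (Fin n) ℝ) (k : Fin n) :
    ∃ p q r s : (Fin d → ℝ) → ℝ, ∀ x,
      mirnnStates id h0 α β1 β2 b U V x 2 k = p (x 0) * q (x 1) + r (x 0) + s (x 1) :=
  -- the first hidden state reads only `x 0`, so the constant input sequence `a` computes it
  ⟨fun a => α k * (V *ᵥ mirnnStates id h0 α β1 β2 b U V (fun _ => a) 1) k, fun c => (U *ᵥ c) k,
    fun a => β1 k * (V *ᵥ mirnnStates id h0 α β1 β2 b U V (fun _ => a) 1) k,
    fun c => β2 k * (U *ᵥ c) k + b k, fun _ => by simp only [mirnnStates, id]; ring⟩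

theorem vecMul_one_submatrix {ι κ K : Type*} [Fintype κ] [DecidableEq κ] [NonAssocSemiring K]
    (e : ι → κ) (v : κ → K) : v ᵥ* (1 : Matrix κ κ K).submatrix id e = v ∘ e := by
  funext i
  simp [vecMul, dotProduct, one_apply]

theorem one_submatrix_mulVec {ι κ K : Type*} [Fintype κ] [DecidableEq κ] [NonAssocSemiring K]
    (e : ι → κ) (v : κ → K) : (1 : Matrix κ κ K).submatrix e id *ᵥ v = v ∘ e := by
  funext i
  simp [mulVec, dotProduct, one_apply]

def rankTwoWitness (hn : 2 ≤ n) (hnd : n ≤ d) : (ℕ → Fin d → ℝ) → ℕ → Fin n → ℝ :=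
  fun x t => cprnnStates id 0 ((1 : Matrix (Fin n) (Fin n) ℝ).submatrix id (Fin.castLE hn))
    ((1 : Matrix (Fin d) (Fin d) ℝ).submatrix id (Fin.castLE hnd ∘ Fin.castLE hn)) (of fun _ _ => 1)
    ((1 : Matrix (Fin d) (Fin d) ℝ).submatrix (Fin.castLE hnd) id) 0 0 x (t + 1)

theorem rankTwoWitness_mem_HCPRNN (hn : 2 ≤ n) (hnd : n ≤ d) :
    rankTwoWitness hn hnd ∈ HCPRNN d n 2 id :=
  ⟨_, _, _, _, _, _, _, fun _ _ => rfl⟩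

theorem rankTwoWitness_one (hn : 2 ≤ n) (hnd : n ≤ d) (x : ℕ → Fin d → ℝ) (k : Fin n) :
    let j := Fin.castLE hnd ∘ Fin.castLE hn
    rankTwoWitness hn hnd x 1 k
      = x 0 (j 0) * x 1 (j 0) + x 0 (j 1) * x 1 (j 1) + x 1 (Fin.castLE hnd k) := by
  simp only [rankTwoWitness, cprnnStates, modeProd_cpT, vecMul_one_submatrix,
    one_submatrix_mulVec]
  simp [mulVec, dotProduct, Fin.sum_univ_two]

theorem rankTwoWitness_not_mem_HMIRNN (hn : 2 ≤ n) (hnd : n ≤ d) :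
    rankTwoWitness hn hnd ∉ HMIRNN d n id := by
  rintro ⟨h0, α, β1, β2, b, U, V, hf⟩
  let k : Fin n := Fin.castLE hn 0
  obtain ⟨p, q, r, s, hpqrs⟩ := exists_mirnnStates_id_two_eq h0 α β1 β2 b U V k
  have hj : (Fin.castLE hnd ∘ Fin.castLE hn) 0 ≠ (Fin.castLE hnd ∘ Fin.castLE hn) 1 := by simp
  refine not_forall_eq_mul_add_add hj (fun c => c (Fin.castLE hnd k)) p q r s fun a c => ?_
  have h := congrFun (hf (fun t => if t = 0 then a else c) 1) k
  rw [rankTwoWitness_one, hpqrs] at h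
  simpa using h

end Separation

/-- If `n ≤ d` and the activation is linear (identity), then for every
`R` with `n < R ≤ R_typ-max(n,d,n)`, `H_MIRNN(n) ⊊ H_CPRNN(R,n)`. -/
theorem mirnn_ssubset_cprnn_linear (d n R : ℕ) (hnd : n ≤ d) (hnR : n < R)
    (hR : R ≤ RtypMax n d n) :
    HMIRNN d n id ⊂ HCPRNN d n R id := by
  have hn : 2 ≤ n := Nat.lt_mul_self_iff.1 (hnR.trans_le (hR.trans RtypMax_le_mul))
  exact (Set.ssubset_iff_of_subset (HMIRNN_subset_HCPRNN.trans (HCPRNN_mono hnR.le))).2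
    ⟨rankTwoWitness hn hnd, HCPRNN_mono (hn.trans hnR.le) (rankTwoWitness_mem_HCPRNN hn hnd),
      rankTwoWitness_not_mem_HMIRNN hn hnd⟩
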